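/- arXiv:2111.04869 — 2 statements merged into one kernel-verified Lean document; each statement's English description precedes it below -/
import Mathlib

section
/- Let G be an amply regular graph with parameters (n, d, α, β) with α = 1 and β > 1. For any edge xy, there exists a perfect matching in the bipartite graph between N_x = Γ(x) \ ({y} ∪ Γ(y)) and N_y = Γ(y) \ ({x} ∪ Γ(x)) whose edges are edges of G; in particular there is a bijection f : N_x → N_y such that v is adjacent to f(v) for all v ∈ N_x. -/
open Finset SimpleGraph

variable {V : Type*} [Fintype V] [DecidableEq V]

/-- A graph is amply regular with parameters `(n, d, a, b)` if it is `d`-regular on `n`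
vertices, adjacent vertices have exactly `a` common neighbors, and vertices at distance 2
have exactly `b` common neighbors. -/
def SimpleGraph.IsAmplyRegular (G : SimpleGraph V) [DecidableRel G.Adj]
    (n d a b : ℕ) : Prop :=
  Fintype.card V = n ∧ G.IsRegularOfDegree d ∧
    (∀ x y, G.Adj x y → (G.neighborFinset x ∩ G.neighborFinset y).card = a) ∧
    (∀ x y, G.dist x y = 2 → (G.neighborFinset x ∩ G.neighborFinset y).card = b)

/-- The measure `μ_x^p` giving mass `p` to `x` and `(1-p)/deg x` to each neighbor of `x`. -/
noncomputable def muMeasure (G : SimpleGraph V) [DecidableRel G.Adj] (p : ℝ) (x : V) :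
    V → ℝ :=
  fun v => if v = x then p else if G.Adj x v then (1 - p) / (G.degree x : ℝ) else 0

/-- `pi` is a transport plan between `mu1` and `mu2`. -/
def IsTransportPlan (mu1 mu2 : V → ℝ) (pi : V → V → ℝ) : Prop :=
  (∀ u v, 0 ≤ pi u v) ∧ (∀ u, ∑ v, pi u v = mu1 u) ∧ (∀ v, ∑ u, pi u v = mu2 v)

/-- The 1-Wasserstein distance between two measures w.r.t. the graph distance. -/
noncomputable def W1 (G : SimpleGraph V) (mu1 mu2 : V → ℝ) : ℝ :=
  sInf {c : ℝ | ∃ pi, IsTransportPlan mu1 mu2 pi ∧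
    c = ∑ u, ∑ v, (G.dist u v : ℝ) * pi u v}

/-- The Lin-Lu-Yau curvature of an edge of a `d`-regular graph, via the idleness
`p = 1/(d+1)` formula of Bourne et al. -/
noncomputable def kappaLLY (G : SimpleGraph V) [DecidableRel G.Adj] (d : ℕ) (x y : V) :
    ℝ :=
  ((d + 1 : ℝ) / d) *
    (1 - W1 G (muMeasure G (1 / (d + 1 : ℝ)) x) (muMeasure G (1 / (d + 1 : ℝ)) y))

/-- `N_x = Γ(x) \ ({y} ∪ Γ(y))`. -/
def Nset (G : SimpleGraph V) [DecidableRel G.Adj] (x y : V) : Finset V :=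
  G.neighborFinset x \ insert y (G.neighborFinset y)

/-- `Δ_{xy} = Γ(x) ∩ Γ(y)`. -/
def Dset (G : SimpleGraph V) [DecidableRel G.Adj] (x y : V) : Finset V :=
  G.neighborFinset x ∩ G.neighborFinset y

lemma aux_mem_Nset {G : SimpleGraph V} [DecidableRel G.Adj] {x y v : V} :
    v ∈ Nset G x y ↔ G.Adj x v ∧ v ≠ y ∧ ¬ G.Adj y v := by
  simp only [Nset, mem_sdiff, mem_insert, mem_neighborFinset, not_or]

lemma aux_key {G : SimpleGraph V} [DecidableRel G.Adj] {b : ℕ}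
    (halpha : ∀ x y, G.Adj x y → (G.neighborFinset x ∩ G.neighborFinset y).card = 1)
    (hbeta : ∀ x y, G.dist x y = 2 → (G.neighborFinset x ∩ G.neighborFinset y).card = b)
    {x y v : V} (hxy : G.Adj x y) (hv : v ∈ Nset G x y) :
    (G.neighborFinset v ∩ Nset G y x).card = b - 1 := by
  obtain ⟨hvx, hvy, hnadj⟩ := aux_mem_Nset.mp hv
  let p : G.Walk v y := Walk.cons hvx.symm (Walk.cons hxy Walk.nil)
  have hle : G.dist v y ≤ 2 := by simpa [p] using SimpleGraph.dist_le p
  have hne : G.dist v y ≠ 0 := by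
    rw [Ne, SimpleGraph.dist_eq_zero_iff_eq_or_not_reachable]
    push_neg
    exact ⟨hvy, ⟨p⟩⟩
  have h1 : G.dist v y ≠ 1 := by
    rw [Ne, SimpleGraph.dist_eq_one_iff_adj]
    exact fun hh => hnadj hh.symm
  have hd : G.dist v y = 2 := by omega
  have hset : G.neighborFinset v ∩ G.neighborFinset y
      = insert x (G.neighborFinset v ∩ Nset G y x) := by
    ext w
    simp only [mem_inter, mem_neighborFinset, mem_insert, aux_mem_Nset]
    constructor
    · rintro ⟨hvw, hyw⟩
      by_cases hwx : w = x
      · exact Or.inl hwx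
      · refine Or.inr ⟨hvw, hyw, hwx, fun hxw => ?_⟩
        obtain ⟨z, hz⟩ := Finset.card_eq_one.mp (halpha x w hxw)
        have h1 : v ∈ G.neighborFinset x ∩ G.neighborFinset w := by
          simp only [mem_inter, mem_neighborFinset]
          exact ⟨hvx, hvw.symm⟩
        have h2 : y ∈ G.neighborFinset x ∩ G.neighborFinset w := by
          simp only [mem_inter, mem_neighborFinset]
          exact ⟨hxy, hyw.symm⟩
        rw [hz, Finset.mem_singleton] at h1 h2
        exact hvy (h1.trans h2.symm)
    · rintro (rfl | ⟨hvw, hyw, _, _⟩)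
      · exact ⟨hvx.symm, hxy.symm⟩
      · exact ⟨hvw, hyw⟩
  have hxnot : x ∉ G.neighborFinset v ∩ Nset G y x := by
    simp only [mem_inter, aux_mem_Nset]
    rintro ⟨-, -, hx, -⟩
    exact hx rfl
  have hbv := hbeta v y hd
  rw [hset, Finset.card_insert_of_notMem hxnot] at hbv
  omega

lemma aux_cardN {G : SimpleGraph V} [DecidableRel G.Adj] {d : ℕ}
    (hreg : G.IsRegularOfDegree d)
    (halpha : ∀ x y, G.Adj x y → (G.neighborFinset x ∩ G.neighborFinset y).card = 1)
    {x y : V} (hxy : G.Adj x y) : (Nset G x y).card = d - 2 := by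
  have hinter : G.neighborFinset x ∩ insert y (G.neighborFinset y)
      = insert y (G.neighborFinset x ∩ G.neighborFinset y) := by
    ext w
    simp only [mem_inter, mem_insert, mem_neighborFinset]
    constructor
    · rintro ⟨h1, (rfl | h2)⟩
      · exact Or.inl rfl
      · exact Or.inr ⟨h1, h2⟩
    · rintro (rfl | ⟨h1, h2⟩)
      · exact ⟨hxy, Or.inl rfl⟩
      · exact ⟨h1, Or.inr h2⟩
  have hynot : y ∉ G.neighborFinset x ∩ G.neighborFinset y := by
    simp only [mem_inter, mem_neighborFinset]
    rintro ⟨-, h⟩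
    exact G.irrefl h
  have hc := Finset.card_sdiff_add_card_inter (G.neighborFinset x)
      (insert y (G.neighborFinset y))
  rw [hinter, Finset.card_insert_of_notMem hynot, halpha x y hxy,
    G.card_neighborFinset_eq_degree, hreg x] at hc
  have : (Nset G x y).card = (G.neighborFinset x \ insert y (G.neighborFinset y)).card := rfl
  omega

/-- In an amply regular graph with `α = 1 < β`, for any edge `xy` there is a perfect
matching between `N_x` and `N_y` along edges of `G`. -/
theorem stmt2 (G : SimpleGraph V) [DecidableRel G.Adj] {n d a b : ℕ}
    (h : G.IsAmplyRegular n d a b) (ha : a = 1) (hb : 1 < b)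
    (x y : V) (hxy : G.Adj x y) :
    ∃ f : V → V, Set.BijOn f ↑(Nset G x y) ↑(Nset G y x) ∧
      ∀ v ∈ Nset G x y, G.Adj v (f v) := by
  obtain ⟨-, hreg, halpha, hbeta⟩ := h
  subst ha
  set N₁ := Nset G x y with hN₁
  set N₂ := Nset G y x with hN₂
  have key1 : ∀ v ∈ N₁, (G.neighborFinset v ∩ N₂).card = b - 1 :=
    fun v hv => aux_key halpha hbeta hxy hv
  have key2 : ∀ w ∈ N₂, (G.neighborFinset w ∩ N₁).card = b - 1 :=
    fun w hw => aux_key halpha hbeta hxy.symm hw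
  classical
  set t : {v // v ∈ N₁} → Finset V := fun v => G.neighborFinset ↑v ∩ N₂ with ht
  have hall : ∀ s : Finset {v // v ∈ N₁}, s.card ≤ (s.biUnion t).card := by
    intro s
    set U := s.biUnion t with hU
    have hUN₂ : ∀ w ∈ U, w ∈ N₂ := fun w hw => by
      obtain ⟨v, hv, hw'⟩ := Finset.mem_biUnion.mp hw
      exact (Finset.mem_inter.mp hw').2
    have hmain : s.card * (b - 1) ≤ U.card * (b - 1) := by
      refine Finset.card_mul_le_card_mul (fun v w => w ∈ t v) ?_ ?_
      · intro a ha
        have hsub : t a ⊆ U.bipartiteAbove (fun v w => w ∈ t v) a := by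
          intro w hw
          exact (Finset.mem_bipartiteAbove _).mpr ⟨Finset.mem_biUnion.mpr ⟨a, ha, hw⟩, hw⟩
        calc b - 1 = (t a).card := (key1 ↑a a.2).symm
          _ ≤ _ := Finset.card_le_card hsub
      · intro w hw
        have hinj := Finset.card_le_card_of_injOn
          (s := s.bipartiteBelow (fun v w => w ∈ t v) w)
          (t := G.neighborFinset w ∩ N₁)
          (fun v : {v // v ∈ N₁} => (v : V)) ?_ ?_
        · rw [key2 w (hUN₂ w hw)] at hinj
          exact hinj
        · intro a haa
          obtain ⟨has, hr⟩ := (Finset.mem_bipartiteBelow _).mp haa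
          have hadj : G.Adj ↑a w := by
            have := (Finset.mem_inter.mp hr).1
            exact (SimpleGraph.mem_neighborFinset _ _ _).mp this
          exact Finset.mem_inter.mpr
            ⟨(SimpleGraph.mem_neighborFinset _ _ _).mpr hadj.symm, a.2⟩
        · intro a _ a' _ hfa
          exact Subtype.ext hfa
    exact Nat.le_of_mul_le_mul_right hmain (by omega)
  obtain ⟨f₀, hf₀inj, hf₀mem⟩ :=
    (Finset.all_card_le_biUnion_card_iff_existsInjective' t).mp hall
  have hc1 : N₁.card = d - 2 := aux_cardN hreg halpha hxy
  have hc2 : N₂.card = d - 2 := aux_cardN hreg halpha hxy.symm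
  have hmem : ∀ v : {v // v ∈ N₁}, f₀ v ∈ N₂ ∧ G.Adj ↑v (f₀ v) := fun v => by
    obtain ⟨h1, h2⟩ := Finset.mem_inter.mp (hf₀mem v)
    exact ⟨h2, (SimpleGraph.mem_neighborFinset _ _ _).mp h1⟩
  set S := Finset.univ.image f₀ with hS
  have hScard : S.card = N₁.card := by
    rw [hS, Finset.card_image_of_injective _ hf₀inj, Finset.card_univ, Fintype.card_coe]
  have hSsub : S ⊆ N₂ := by
    intro w hw
    obtain ⟨v, -, rfl⟩ := Finset.mem_image.mp hw
    exact (hmem v).1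
  have hSeq : S = N₂ := Finset.eq_of_subset_of_card_le hSsub (by omega)
  refine ⟨fun v => if hv : v ∈ N₁ then f₀ ⟨v, hv⟩ else v, ⟨?_, ?_, ?_⟩, ?_⟩
  · intro v hv
    rw [Finset.mem_coe] at hv
    show (if hv' : v ∈ N₁ then f₀ ⟨v, hv'⟩ else v) ∈ (N₂ : Set V)
    rw [dif_pos hv]
    exact Finset.mem_coe.mpr (hmem ⟨v, hv⟩).1
  · intro u hu v hv heq
    rw [Finset.mem_coe] at hu hv
    simp only [dif_pos hu, dif_pos hv] at heq
    exact congrArg Subtype.val (hf₀inj heq)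
  · intro w hw
    rw [Finset.mem_coe, ← hSeq] at hw
    obtain ⟨v, -, rfl⟩ := Finset.mem_image.mp hw
    refine ⟨↑v, Finset.mem_coe.mpr v.2, ?_⟩
    show (if hv' : (v : V) ∈ N₁ then f₀ ⟨↑v, hv'⟩ else ↑v) = f₀ v
    rw [dif_pos v.2]
  · intro v hv
    show G.Adj v (if hv' : v ∈ N₁ then f₀ ⟨v, hv'⟩ else v)
    rw [dif_pos hv]
    exact (hmem ⟨v, hv⟩).2
end

section
/- Let G be an amply regular graph with parameters (n, d, α, β) with α = 1 and β > 1. Then for every edge xy, the Lin-Lu-Yau curvature satisfies κ(x, y) = 3/d. -/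
/-! For an edge `xy`, with idleness `1/(d+1)` both measures are uniform of mass `1/(d+1)`,
on `{x, y} ∪ Δ_xy ∪ N_x` and on `{x, y} ∪ Δ_xy ∪ N_y` respectively. The mass on `N_x` lies
outside the support of `μ_y`, so it travels at least distance `1` and `W₁ ≥ |N_x|/(d+1)`; a
perfect matching between `N_x` and `N_y` along edges of `G` attains this bound, and then
`κ(x,y) = (2 + |Δ_xy|)/d`. When `α = 1`, each `u ∈ N_x` is at distance `2` from `y`, and its `β`
common neighbours with `y` are `x` and its neighbours in `N_y`. So the bipartite graph between
`N_x` and `N_y` is `(β - 1)`-regular, and for `β > 1` Hall's theorem provides the matching. -/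

open Finset SimpleGraph

variable {V : Type*} [Fintype V] [DecidableEq V]

theorem Finset.exists_bijOn_of_biregular {α : Type*} [DecidableEq α] {A B : Finset α}
    (r : α → α → Prop) [DecidableRel r] {k : ℕ} (hk : 0 < k)
    (hA : ∀ a ∈ A, #{b ∈ B | r a b} = k) (hB : ∀ b ∈ B, #{a ∈ A | r a b} = k) :
    ∃ σ : α → α, Set.BijOn σ A B ∧ ∀ a ∈ A, r a (σ a) := by
  set t : A → Finset α := fun a => {b ∈ B | r a b}
  have hall : ∀ s : Finset A, #s ≤ #(s.biUnion t) := by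
    intro s
    refine Nat.le_of_mul_le_mul_right (card_mul_le_card_mul (fun a b => b ∈ t a) ?_ ?_) hk
    · intro a ha
      rw [bipartiteAbove, filter_mem_eq_inter, inter_eq_right.mpr (subset_biUnion_of_mem t ha)]
      exact (hA a a.2).ge
    · intro b hb
      obtain ⟨a, -, hba⟩ := mem_biUnion.mp hb
      calc #(bipartiteBelow (fun a b => b ∈ t a) s b) ≤ #{a ∈ A | r a b} :=
            card_le_card_of_injOn Subtype.val
              (fun a ha => by simp_all [bipartiteBelow, t]) Subtype.val_injective.injOn
        _ = k := hB b (mem_filter.mp hba).1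
  obtain ⟨f, hf_inj, hf⟩ := (all_card_le_biUnion_card_iff_exists_injective t).mp hall
  have hcard : #A = #B := Nat.eq_of_mul_eq_mul_right hk (card_mul_eq_card_mul r hA hB)
  set σ : α → α := fun a => if h : a ∈ A then f ⟨a, h⟩ else a
  have hσ : ∀ a (ha : a ∈ A), σ a = f ⟨a, ha⟩ := fun a ha => dif_pos ha
  have hmaps : Set.MapsTo σ A B := fun a ha => by
    rw [hσ a ha]; exact (mem_filter.mp (hf ⟨a, ha⟩)).1
  have hinj : Set.InjOn σ A := fun a ha a' ha' h => by
    rw [hσ a ha, hσ a' ha'] at h; exact congrArg Subtype.val (hf_inj h)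
  refine ⟨σ, ⟨hmaps, hinj, surjOn_of_injOn_of_card_le σ hmaps hinj hcard.ge⟩, fun a ha => ?_⟩
  rw [hσ a ha]; exact (mem_filter.mp (hf ⟨a, ha⟩)).2

section Transport

variable {α : Type*} [Fintype α]

noncomputable def transportCost (G : SimpleGraph α) (π : α → α → ℝ) : ℝ :=
  ∑ u, ∑ v, (G.dist u v : ℝ) * π u v

lemma transportCost_add (G : SimpleGraph α) (π π' : α → α → ℝ) :
    transportCost G (π + π') = transportCost G π + transportCost G π' := by
  simp [transportCost, mul_add, sum_add_distrib]

lemma transportCost_of_map [DecidableEq α] (G : SimpleGraph α) (P : Finset α) (σ : α → α)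
    (c : ℝ) :
    transportCost G (fun u v => if u ∈ P ∧ σ u = v then c else 0) =
      c * ∑ u ∈ P, (G.dist u (σ u) : ℝ) := by
  simp [transportCost, mul_sum, ite_and, mul_comm]

namespace IsTransportPlan

variable {μ ν μ' ν' : α → ℝ} {π π' : α → α → ℝ}

lemma apply_eq_zero_of_eq_zero (hπ : IsTransportPlan μ ν π) (u : α) {v : α} (hv : ν v = 0) :
    π u v = 0 :=
  le_antisymm (hv ▸ hπ.2.2 v ▸ single_le_sum (fun w _ => hπ.1 w v) (mem_univ u)) (hπ.1 u v)

lemma add (hπ : IsTransportPlan μ ν π) (hπ' : IsTransportPlan μ' ν' π') :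
    IsTransportPlan (μ + μ') (ν + ν') (π + π') :=
  ⟨fun u v => add_nonneg (hπ.1 u v) (hπ'.1 u v),
    fun u => by simp [sum_add_distrib, hπ.2.1, hπ'.2.1],
    fun v => by simp [sum_add_distrib, hπ.2.2, hπ'.2.2]⟩

lemma mul_sum_le_transportCost (G : SimpleGraph α) (hπ : IsTransportPlan μ ν π) (A : Finset α)
    {r : ℝ} (hA : ∀ u ∈ A, ∀ v, ν v ≠ 0 → r ≤ G.dist u v) :
    r * ∑ u ∈ A, μ u ≤ transportCost G π :=
  calc r * ∑ u ∈ A, μ u = ∑ u ∈ A, ∑ v, r * π u v := by simp [mul_sum, ← hπ.2.1]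
    _ ≤ ∑ u ∈ A, ∑ v, (G.dist u v : ℝ) * π u v := by
      refine sum_le_sum fun u hu => sum_le_sum fun v _ => ?_
      by_cases hv : ν v = 0
      · simp [hπ.apply_eq_zero_of_eq_zero u hv]
      · exact mul_le_mul_of_nonneg_right (hA u hu v hv) (hπ.1 u v)
    _ ≤ transportCost G π :=
      sum_le_sum_of_subset_of_nonneg (subset_univ A) fun u _ _ =>
        sum_nonneg fun v _ => mul_nonneg (Nat.cast_nonneg _) (hπ.1 u v)

end IsTransportPlan

lemma isTransportPlan_indicator_of_bijOn [DecidableEq α] {P Q : Finset α} {σ : α → α}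
    (hσ : Set.BijOn σ P Q) {c : ℝ} (hc : 0 ≤ c) :
    IsTransportPlan ((P : Set α).indicator fun _ => c) ((Q : Set α).indicator fun _ => c)
      (fun u v => if u ∈ P ∧ σ u = v then c else 0) := by
  refine ⟨fun u v => by positivity, fun u => ?_, fun v => ?_⟩
  · by_cases hu : u ∈ P <;> simp [hu]
  · have hPQ : P.image σ = Q := by rw [← coe_inj, coe_image, hσ.image_eq]
    calc ∑ u, (if u ∈ P ∧ σ u = v then c else 0) = ∑ u ∈ P, if σ u = v then c else 0 := by
          simp [ite_and, sum_ite_mem]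
      _ = ∑ w ∈ P.image σ, if w = v then c else 0 :=
          (sum_image (f := fun w => if w = v then c else 0) hσ.injOn).symm
      _ = _ := by simp [hPQ, Set.indicator_apply]

lemma W1_eq_of_isLeast {G : SimpleGraph α} {μ ν : α → ℝ} {π : α → α → ℝ}
    (hπ : IsTransportPlan μ ν π)
    (hle : ∀ π', IsTransportPlan μ ν π' → transportCost G π ≤ transportCost G π') :
    W1 G μ ν = transportCost G π :=
  IsLeast.csInf_eq ⟨⟨π, hπ, rfl⟩, by rintro _ ⟨π', hπ', rfl⟩; exact hle π' hπ'⟩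

end Transport

namespace SimpleGraph

variable {G : SimpleGraph V} [DecidableRel G.Adj] {x y u v : V}

lemma muMeasure_eq_indicator {d : ℕ} (hreg : G.IsRegularOfDegree d) (w : V) :
    muMeasure G (1 / (d + 1 : ℝ)) w =
      (↑(insert w (G.neighborFinset w)) : Set V).indicator fun _ => 1 / (d + 1 : ℝ) := by
  ext v
  by_cases hvw : v = w
  · simp [muMeasure, hvw]
  by_cases hwv : G.Adj w v
  · have hd : (d : ℝ) ≠ 0 := by
      rw [← hreg w]; exact_mod_cast (G.degree_pos_iff_exists_adj w).mpr ⟨v, hwv⟩ |>.ne'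
    simp only [muMeasure, hvw, ↓reduceIte, hwv, one_div, hreg w, coe_insert,
      coe_neighborFinset, Set.mem_insert_iff, mem_neighborSet, or_true, Set.indicator_of_mem]
    field_simp
    ring
  · simp [muMeasure, hvw, hwv]

lemma Dset_comm (x y : V) : Dset G x y = Dset G y x := inter_comm _ _

lemma insert_neighborFinset_eq (hxy : G.Adj x y) :
    insert x (G.neighborFinset x) = {x, y} ∪ Dset G x y ∪ Nset G x y := by
  ext v
  simp only [Dset, Nset, mem_insert, mem_union, mem_singleton, mem_inter, mem_sdiff,
    mem_neighborFinset]
  constructor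
  · rintro (rfl | hv) <;> tauto
  · rintro (((rfl | rfl) | ⟨hv, -⟩) | ⟨hv, -⟩) <;> tauto

lemma disjoint_Nset (hxy : G.Adj x y) : Disjoint ({x, y} ∪ Dset G x y) (Nset G x y) := by
  refine Finset.disjoint_left.mpr fun v hv hv' => ?_
  simp only [Dset, Nset, mem_insert, mem_union, mem_singleton, mem_inter, mem_sdiff,
    mem_neighborFinset] at hv hv'
  obtain ⟨hxv, hv'⟩ := hv'
  rcases hv with (rfl | rfl) | ⟨-, hv⟩
  · exact G.irrefl hxv
  · exact hv' (Or.inl rfl)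
  · exact hv' (Or.inr hv)

lemma card_Nset_add_card_Dset (hxy : G.Adj x y) :
    #(Nset G x y) + #(Dset G x y) + 1 = G.degree x := by
  have hy : y ∉ Dset G x y := by simp [Dset]
  have hinter : G.neighborFinset x ∩ insert y (G.neighborFinset y) = insert y (Dset G x y) :=
    inter_insert_of_mem ((G.mem_neighborFinset x y).mpr hxy)
  rw [← card_neighborFinset_eq_degree,
    ← card_sdiff_add_card_inter (G.neighborFinset x) (insert y (G.neighborFinset y)), hinter,
    card_insert_of_notMem hy, ← add_assoc]
  rfl

lemma one_le_dist_of_mem_Nset (hxy : G.Adj x y) (hu : u ∈ Nset G x y)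
    (hv : v ∈ insert y (G.neighborFinset y)) : 1 ≤ G.dist u v := by
  simp only [Nset, mem_sdiff, mem_insert, mem_neighborFinset, not_or] at hu hv
  obtain ⟨hxu, huy, hyu⟩ := hu
  have huy' : G.Reachable u y := hxu.symm.reachable.trans hxy.reachable
  rcases hv with rfl | hyv
  · exact (huy'.pos_dist_of_ne huy)
  · exact (huy'.trans hyv.reachable).pos_dist_of_ne (by rintro rfl; exact hyu hyv)

lemma indicator_closedNbhd_eq (hxy : G.Adj x y) (c : ℝ) :
    (↑(insert x (G.neighborFinset x)) : Set V).indicator (fun _ => c) =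
      (↑({x, y} ∪ Dset G x y) : Set V).indicator (fun _ => c) +
        (↑(Nset G x y) : Set V).indicator (fun _ => c) := by
  rw [insert_neighborFinset_eq hxy, coe_union,
    Set.indicator_union_of_disjoint (disjoint_coe.mpr (disjoint_Nset hxy))]
  rfl

theorem W1_muMeasure_eq_of_bijOn {d : ℕ} (hreg : G.IsRegularOfDegree d) (hxy : G.Adj x y)
    {σ : V → V} (hσ : Set.BijOn σ (Nset G x y) (Nset G y x))
    (hadj : ∀ u ∈ Nset G x y, G.Adj u (σ u)) :
    W1 G (muMeasure G (1 / (d + 1 : ℝ)) x) (muMeasure G (1 / (d + 1 : ℝ)) y) =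
      #(Nset G x y) / (d + 1) := by
  set q : ℝ := 1 / (d + 1)
  have hq : 0 ≤ q := by positivity
  set S := {x, y} ∪ Dset G x y
  have hμx := indicator_closedNbhd_eq hxy q
  have hμy := indicator_closedNbhd_eq hxy.symm q
  rw [pair_comm, ← Dset_comm] at hμy
  set π := (fun u v => if u ∈ S ∧ id u = v then q else 0) +
    fun u v => if u ∈ Nset G x y ∧ σ u = v then q else 0
  have hπ : IsTransportPlan (muMeasure G q x) (muMeasure G q y) π := by
    rw [muMeasure_eq_indicator hreg, muMeasure_eq_indicator hreg, hμx, hμy]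
    exact (isTransportPlan_indicator_of_bijOn (Set.bijOn_id _) hq).add
      (isTransportPlan_indicator_of_bijOn hσ hq)
  have hcost : transportCost G π = q * #(Nset G x y) := by
    have hdist : ∀ u ∈ Nset G x y, (G.dist u (σ u) : ℝ) = 1 := fun u hu => by
      rw [dist_eq_one_iff_adj.mpr (hadj u hu), Nat.cast_one]
    rw [transportCost_add, transportCost_of_map, transportCost_of_map, sum_congr rfl hdist]
    simp
  have hlower : ∀ π', IsTransportPlan (muMeasure G q x) (muMeasure G q y) π' →
      q * #(Nset G x y) ≤ transportCost G π' := by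
    intro π' hπ'
    have hmass : ∑ u ∈ Nset G x y, muMeasure G q x u = q * #(Nset G x y) := by
      rw [muMeasure_eq_indicator hreg, insert_neighborFinset_eq hxy,
        sum_congr rfl fun u hu => Set.indicator_of_mem (mem_coe.mpr (mem_union_right _ hu)) _,
        sum_const, nsmul_eq_mul, mul_comm]
    calc q * #(Nset G x y) = 1 * ∑ u ∈ Nset G x y, muMeasure G q x u := by rw [hmass, one_mul]
      _ ≤ transportCost G π' := hπ'.mul_sum_le_transportCost G _ fun u hu v hv => by
        rw [muMeasure_eq_indicator hreg] at hv
        exact_mod_cast one_le_dist_of_mem_Nset hxy hu (Set.mem_of_indicator_ne_zero hv)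
  rw [W1_eq_of_isLeast hπ fun π' hπ' => hcost ▸ hlower π' hπ', hcost]
  ring

theorem kappaLLY_eq_of_bijOn {d : ℕ} (hreg : G.IsRegularOfDegree d) (hxy : G.Adj x y)
    {σ : V → V} (hσ : Set.BijOn σ (Nset G x y) (Nset G y x))
    (hadj : ∀ u ∈ Nset G x y, G.Adj u (σ u)) :
    kappaLLY G d x y = (2 + #(Dset G x y)) / d := by
  have hcard := card_Nset_add_card_Dset hxy
  rw [hreg x] at hcard
  have hd : (d : ℝ) ≠ 0 := by exact_mod_cast (by omega : d ≠ 0)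
  have hcardR : (#(Nset G x y) : ℝ) = d - 1 - #(Dset G x y) := by
    rw [← hcard]; push_cast; ring
  rw [kappaLLY, W1_muMeasure_eq_of_bijOn hreg hxy hσ hadj, hcardR]
  field_simp
  ring

lemma dist_eq_two_of_mem_Nset (hxy : G.Adj x y) (hu : u ∈ Nset G x y) :
    G.dist u y = 2 := by
  simp only [Nset, mem_sdiff, mem_insert, mem_neighborFinset, not_or] at hu
  obtain ⟨hxu, huy, hyu⟩ := hu
  have hle : G.dist u y ≤ 2 := G.dist_le (.cons hxu.symm (.cons hxy .nil))
  have hpos : 0 < G.dist u y := (hxu.symm.reachable.trans hxy.reachable).pos_dist_of_ne huy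
  have hne : G.dist u y ≠ 1 := fun h => hyu (dist_eq_one_iff_adj.mp h).symm
  omega

/-- If `v ≠ x` were adjacent to `x`, the edge `xv` would have the two common neighbours
`y` and `u`. -/
lemma Dset_eq_insert_filter_Nset (hα : ∀ x y, G.Adj x y → #(Dset G x y) ≤ 1)
    (hxy : G.Adj x y) (hu : u ∈ Nset G x y) :
    Dset G u y = insert x {v ∈ Nset G y x | G.Adj u v} := by
  simp only [Nset, mem_sdiff, mem_insert, mem_neighborFinset, not_or] at hu
  obtain ⟨hxu, huy, -⟩ := hu
  ext v
  simp only [Dset, Nset, mem_inter, mem_insert, mem_filter, mem_sdiff, mem_neighborFinset,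
    not_or]
  constructor
  · rintro ⟨huv, hyv⟩
    by_cases hvx : v = x
    · exact Or.inl hvx
    refine Or.inr ⟨⟨hyv, hvx, fun hxv => huy ?_⟩, huv⟩
    refine card_le_one.mp (hα x v hxv) u ?_ y ?_ <;>
      simp only [Dset, mem_inter, mem_neighborFinset]
    exacts [⟨hxu, huv.symm⟩, ⟨hxy, hyv.symm⟩]
  · rintro (rfl | ⟨⟨hyv, -⟩, huv⟩)
    exacts [⟨hxu.symm, hxy.symm⟩, ⟨huv, hyv⟩]

lemma card_filter_adj_Nset_add_one (hα : ∀ x y, G.Adj x y → #(Dset G x y) ≤ 1) {b : ℕ}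
    (hβ : ∀ x y, G.dist x y = 2 → #(Dset G x y) = b) (hxy : G.Adj x y)
    (hu : u ∈ Nset G x y) : #{v ∈ Nset G y x | G.Adj u v} + 1 = b := by
  rw [← hβ u y (dist_eq_two_of_mem_Nset hxy hu), Dset_eq_insert_filter_Nset hα hxy hu,
    card_insert_of_notMem (by simp [Nset])]

lemma exists_bijOn_Nset (hα : ∀ x y, G.Adj x y → #(Dset G x y) ≤ 1) {b : ℕ}
    (hβ : ∀ x y, G.dist x y = 2 → #(Dset G x y) = b) (hb : 1 < b) (hxy : G.Adj x y) :
    ∃ σ : V → V, Set.BijOn σ (Nset G x y) (Nset G y x) ∧ ∀ u ∈ Nset G x y, G.Adj u (σ u) := by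
  refine exists_bijOn_of_biregular G.Adj (k := b - 1) (by omega) (fun u hu => ?_) fun v hv => ?_
  · have := card_filter_adj_Nset_add_one hα hβ hxy hu
    omega
  · have := card_filter_adj_Nset_add_one hα hβ hxy.symm hv
    simp only [G.adj_comm v] at this
    omega

end SimpleGraph

/-- In an amply regular graph with `α = 1 < β`, every edge has Lin-Lu-Yau curvature
`3/d`. -/
theorem stmt5 (G : SimpleGraph V) [DecidableRel G.Adj] {n d a b : ℕ}
    (h : G.IsAmplyRegular n d a b) (ha : a = 1) (hb : 1 < b)
    (x y : V) (hxy : G.Adj x y) :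
    kappaLLY G d x y = 3 / d := by
  obtain ⟨-, hreg, hα, hβ⟩ := h
  subst ha
  obtain ⟨σ, hσ, hadj⟩ := exists_bijOn_Nset (fun x y h => (hα x y h).le) hβ hb hxy
  rw [kappaLLY_eq_of_bijOn hreg hxy hσ hadj, show #(Dset G x y) = 1 from hα x y hxy]
  norm_num
end
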